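/- For every positive x ∈ N_{p/q} and every natural number i, V_{p/q}(x) = (p/q)^i if and only if rep(x) has a suffix of the form a·0^i with digit a ≠ 0 (equivalently, rep(x) ends with exactly i zeros). -/

import Mathlib

def pqVal (p q : ℕ) : List ℕ → ℚ
  | [] => 0
  | a :: u => (a : ℚ) / q + ((p : ℚ) / q) * pqVal p q u

def pqSet (p q : ℕ) : Set ℚ :=
  {x | ∃ u : List ℕ, (∀ a ∈ u, a < p) ∧ pqVal p q u = x}

lemma pqVal_denom (p q : ℕ) (hq : 0 < q) :
    ∀ u : List ℕ, ∃ m : ℕ, pqVal p q u * (q : ℚ) ^ u.length = m := by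
  intro u
  induction u with
  | nil => exact ⟨0, by simp [pqVal]⟩
  | cons a u ih =>
    obtain ⟨m, hm⟩ := ih
    refine ⟨a * q ^ u.length + p * m, ?_⟩
    have hq0 : (q : ℚ) ≠ 0 := by positivity
    simp only [pqVal, List.length_cons]
    push_cast
    field_simp
    linear_combination (p : ℚ) * q * hm

lemma pq_key (p q : ℕ) (hq : 0 < q) (hcop : Nat.Coprime p q) (a : ℕ) (hap : a < p)
    (u w : List ℕ) (h : pqVal p q (a :: u) = pqVal p q (0 :: w)) : a = 0 := by
  obtain ⟨mu, hmu⟩ := pqVal_denom p q hq u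
  obtain ⟨mw, hmw⟩ := pqVal_denom p q hq w
  have hq0 : (q : ℚ) ≠ 0 := by positivity
  have hQ : (a : ℚ) * q ^ (u.length + w.length) =
      p * ((mw : ℚ) * q ^ u.length - (mu : ℚ) * q ^ w.length) := by
    simp only [pqVal] at h
    field_simp at h
    linear_combination (q:ℚ)^u.length * (q:ℚ)^w.length * h - (p:ℚ)*(q:ℚ)^w.length*hmu + (p:ℚ)*(q:ℚ)^u.length*hmw
  have hZ : (a : ℤ) * (q : ℤ) ^ (u.length + w.length) =
      p * ((mw : ℤ) * (q : ℤ) ^ u.length - (mu : ℤ) * (q : ℤ) ^ w.length) := by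
    exact_mod_cast hQ
  have hdvd : (p : ℤ) ∣ (a : ℤ) * (q : ℤ) ^ (u.length + w.length) := ⟨_, hZ⟩
  have hdvdN : p ∣ a * q ^ (u.length + w.length) := by exact_mod_cast hdvd
  have hpa : p ∣ a := (Nat.Coprime.pow_right _ hcop).dvd_of_dvd_mul_right hdvdN
  exact Nat.eq_zero_of_dvd_of_lt hpa hap

lemma pqVal_replicate (p q : ℕ) (k : ℕ) (w : List ℕ) :
    pqVal p q (List.replicate k 0 ++ w) = ((p : ℚ) / q) ^ k * pqVal p q w := by
  induction k with
  | zero => simp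
  | succ k ih => simp [pqVal, List.replicate_succ, ih, pow_succ]; ring

lemma pq_main (p q : ℕ) (hq : 1 < q) (hpq : q < p) (hcop : Nat.Coprime p q)
    (k a : ℕ) (u : List ℕ) (ha : a ≠ 0) (hap : a < p) (hu : ∀ b ∈ u, b < p) :
    IsGreatest {y : ℚ | ∃ j : ℕ, y = ((p : ℚ) / q) ^ j ∧
        pqVal p q (List.replicate k 0 ++ a :: u) / y ∈ pqSet p q}
      (((p : ℚ) / q) ^ k) := by
  set P : ℚ := (p : ℚ) / q with hP
  have hq0 : (0 : ℚ) < q := by exact_mod_cast Nat.lt_of_lt_of_le Nat.zero_lt_one hq.le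
  have hP1 : 1 < P := by
    rw [hP, lt_div_iff₀ hq0, one_mul]
    exact_mod_cast hpq
  have hP0 : (0 : ℚ) < P := lt_trans one_pos hP1
  have hPk : P ^ k ≠ 0 := by positivity
  have hx : pqVal p q (List.replicate k 0 ++ a :: u) = P ^ k * pqVal p q (a :: u) :=
    pqVal_replicate p q k _
  constructor
  · refine ⟨k, rfl, a :: u, ?_, ?_⟩
    · intro b hb
      rcases List.mem_cons.1 hb with h | h
      · exact h ▸ hap
      · exact hu b h
    · rw [hx]; field_simp
  · rintro y ⟨j, rfl, w, hw, hwval⟩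
    by_contra hle
    have hkj : k < j := by
      by_contra hjk
      exact hle (pow_le_pow_right₀ hP1.le (Nat.le_of_not_lt hjk))
    have hPj : P ^ j ≠ 0 := by positivity
    have hxw : pqVal p q (List.replicate k 0 ++ a :: u) = P ^ j * pqVal p q w := by
      rw [hwval]; field_simp
    have heq : pqVal p q (a :: u) = pqVal p q (0 :: (List.replicate (j - k - 1) 0 ++ w)) := by
      have hjsplit : j = k + (1 + (j - k - 1)) := by omega
      have : P ^ k * pqVal p q (a :: u) = P ^ k * (P ^ (1 + (j - k - 1)) * pqVal p q w) := by
        rw [← hx, hxw, ← mul_assoc, ← pow_add, ← hjsplit]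
      have h2 := mul_left_cancel₀ hPk this
      rw [h2]
      simp only [pqVal, Nat.cast_zero, zero_div, zero_add, pqVal_replicate, pow_add, pow_one]
      ring
    exact ha (pq_key p q (Nat.lt_of_lt_of_le Nat.zero_lt_one hq.le) hcop a hap u _ heq)

lemma pq_decomp (p q : ℕ) (hq : 0 < q) (hp : 0 < p) :
    ∀ r : List ℕ, pqVal p q r ≠ 0 →
      ∃ (k a : ℕ) (u : List ℕ), a ≠ 0 ∧ r = List.replicate k 0 ++ a :: u := by
  intro r
  induction r with
  | nil => intro h; exact absurd rfl h
  | cons b t ih =>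
    intro h
    by_cases hb : b = 0
    · subst hb
      have ht : pqVal p q t ≠ 0 := by
        intro h0
        apply h
        simp [pqVal, h0]
      obtain ⟨k, a, u, ha, hu⟩ := ih ht
      exact ⟨k + 1, a, u, ha, by simp [List.replicate_succ, hu]⟩
    · exact ⟨0, b, t, hb, by simp⟩

/-- for positive x ∈ N_{p/q} with representation r (without
leading zeros; least-significant first, so the last list entry is nonzero),
V_{p/q}(x) = (p/q)^i — i.e. (p/q)^i is the greatest power (p/q)^j of p/q with
x·(p/q)^{-j} ∈ N_{p/q} — iff rep(x) ends (most-significant-first) with a·0^i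
for some digit a ≠ 0, i.e. r = 0^i ++ a :: u. -/
theorem stmt_15 (p q : ℕ) (hq : 1 < q) (hpq : q < p) (hcop : Nat.Coprime p q)
    (x : ℚ) (hxpos : 0 < x) (r : List ℕ) (hr : ∀ b ∈ r, b < p)
    (hlead : r.getLast? ≠ some 0) (hval : pqVal p q r = x) (i : ℕ) :
    IsGreatest {y : ℚ | ∃ j : ℕ, y = ((p : ℚ) / q) ^ j ∧ x / y ∈ pqSet p q}
        (((p : ℚ) / q) ^ i)
      ↔ ∃ (a : ℕ) (u : List ℕ), a ≠ 0 ∧ r = List.replicate i 0 ++ a :: u := by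
  subst hval
  have hq0 : 0 < q := Nat.lt_of_lt_of_le Nat.zero_lt_one hq.le
  have hp0 : 0 < p := lt_trans hq0 hpq
  obtain ⟨k, a, u, ha, hru⟩ := pq_decomp p q hq0 hp0 r (ne_of_gt hxpos)
  have hap : a < p := hr a (by rw [hru]; simp)
  have hu : ∀ b ∈ u, b < p := fun b hb => hr b (by rw [hru]; simp [hb])
  have hmain := pq_main p q hq hpq hcop k a u ha hap hu
  rw [← hru] at hmain
  have hP1 : 1 < (p : ℚ) / q := by
    rw [lt_div_iff₀ (by exact_mod_cast hq0), one_mul]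
    exact_mod_cast hpq
  constructor
  · intro hG
    have hpow : ((p : ℚ) / q) ^ i = ((p : ℚ) / q) ^ k := hG.unique hmain
    have hik : i = k := (pow_right_strictMono₀ hP1).injective hpow
    exact ⟨a, u, ha, hik ▸ hru⟩
  · rintro ⟨a', u', ha', hru'⟩
    have hap' : a' < p := hr a' (by rw [hru']; simp)
    have hu' : ∀ b ∈ u', b < p := fun b hb => hr b (by rw [hru']; simp [hb])
    have h2 := pq_main p q hq hpq hcop i a' u' ha' hap' hu'
    rwa [← hru'] at h2
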